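/- Let T be a tree with positive edge weights and no degree-2 vertices, and let (v_0, v_1, ..., v_k) be a path in T with consecutive vertices adjacent. Then the sets L^{v_i v_{i+1}}_{v_i} of leaves closer to v_i than to v_{i+1} are strictly increasing in i: L^{v_i v_{i+1}}_{v_i} ⊊ L^{v_{i+1} v_{i+2}}_{v_{i+1}} for all 0 ≤ i ≤ k−2. -/

import Mathlib

open SimpleGraph Finset

noncomputable section

variable {V : Type*}

/-- The weight of a walk: sum of the weights of its edges. -/
def walkWeight {G : SimpleGraph V} (w : Sym2 V → ℝ) {x y : V} (p : G.Walk x y) : ℝ :=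
  (p.edges.map w).sum

/-- The unique path between two vertices of a tree. -/
noncomputable def tpath {G : SimpleGraph V} (hT : G.IsTree) (x y : V) : G.Walk x y :=
  (hT.existsUnique_path x y).choose

/-- The weighted distance between two vertices of a tree: the weight of the unique path. -/
noncomputable def tdist {G : SimpleGraph V} (hT : G.IsTree) (w : Sym2 V → ℝ) (x y : V) : ℝ :=
  walkWeight w (tpath hT x y)

/-- The distance from a vertex `x` to a path `p`: the minimum distance from `x`
to a vertex on `p`. -/
noncomputable def distToPath {G : SimpleGraph V} (hT : G.IsTree) (w : Sym2 V → ℝ)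
    (x : V) {a b : V} (p : G.Walk a b) : ℝ :=
  sInf {r | ∃ y ∈ p.support, r = tdist hT w x y}

/-- The set of leaves of a graph. -/
def leaves (G : SimpleGraph V) [Fintype V] [DecidableRel G.Adj] : Finset V :=
  Finset.univ.filter (fun v => G.degree v = 1)

/-- The leaf-status of a vertex: the sum of its distances to all leaves. -/
noncomputable def leafStatus {G : SimpleGraph V} [Fintype V] [DecidableRel G.Adj]
    (hT : G.IsTree) (w : Sym2 V → ℝ) (u : V) : ℝ :=
  ∑ x ∈ leaves G, tdist hT w u x

/-- The leaf-status of a path: the sum of the distances of all leaves to the path. -/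
noncomputable def pathLeafStatus {G : SimpleGraph V} [Fintype V] [DecidableRel G.Adj]
    (hT : G.IsTree) (w : Sym2 V → ℝ) {a b : V} (p : G.Walk a b) : ℝ :=
  ∑ x ∈ leaves G, distToPath hT w x p

/-- `Lside hT w u v` is the set `L^{uv}_u` of leaves strictly closer to `u` than to `v`. -/
noncomputable def Lside {G : SimpleGraph V} [Fintype V] [DecidableRel G.Adj]
    (hT : G.IsTree) (w : Sym2 V → ℝ) (u v : V) : Finset V :=
  (leaves G).filter (fun x => tdist hT w x u < tdist hT w x v)

/-! A leaf `x` lies on the `u`-side of an edge `uv` exactly when the tree path from `x` to `v`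
passes through `u`. If `x` is on the `a`-side of `ab` and `c ≠ a` is another neighbour of `b`,
then the path from `x` to `c` runs through `a` and `b`, so `x` is on the `b`-side of `bc`; this
gives the inclusion. Since `b` has degree at least 3, it has a third neighbour `u`; a leaf on
the far side of the edge `bu`, which exists because the tree is finite, lies on the `b`-side of
both `ab` and `bc`, and so witnesses strictness. -/

section TreePath

variable {G : SimpleGraph V} (hT : G.IsTree)

lemma tpath_isPath (x y : V) : (tpath hT x y).IsPath :=
  (hT.existsUnique_path x y).choose_spec.1

lemma eq_tpath {x y : V} (p : G.Walk x y) (hp : p.IsPath) : p = tpath hT x y :=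
  (hT.existsUnique_path x y).choose_spec.2 p hp

lemma tpath_self (x : V) : tpath hT x x = Walk.nil :=
  (eq_tpath hT _ Walk.IsPath.nil).symm

lemma tpath_of_adj {u v : V} (h : G.Adj u v) : tpath hT u v = Walk.cons h Walk.nil :=
  (eq_tpath hT _ (by simp [Walk.cons_isPath_iff, h.ne])).symm

lemma tpath_cons {u v x : V} (h : G.Adj u v) (hu : u ∉ (tpath hT v x).support) :
    tpath hT u x = Walk.cons h (tpath hT v x) :=
  (eq_tpath hT _ ((Walk.cons_isPath_iff h _).2 ⟨tpath_isPath hT v x, hu⟩)).symm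

lemma tpath_concat {x u v : V} (h : G.Adj u v) (hv : v ∉ (tpath hT x u).support) :
    tpath hT x v = (tpath hT x u).concat h :=
  (eq_tpath hT _ ((tpath_isPath hT x u).concat hv h)).symm

lemma tpath_takeUntil [DecidableEq V] {x y z : V} (hz : z ∈ (tpath hT x y).support) :
    (tpath hT x y).takeUntil z hz = tpath hT x z :=
  eq_tpath hT _ ((tpath_isPath hT x y).takeUntil hz)

lemma tpath_dropUntil [DecidableEq V] {x y z : V} (hz : z ∈ (tpath hT x y).support) :
    (tpath hT x y).dropUntil z hz = tpath hT z y :=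
  eq_tpath hT _ ((tpath_isPath hT x y).dropUntil hz)

lemma tpath_eq_append {x y z : V} (hz : z ∈ (tpath hT x y).support) :
    tpath hT x y = (tpath hT x z).append (tpath hT z y) := by
  classical
  rw [← tpath_takeUntil hT hz, ← tpath_dropUntil hT hz, Walk.take_spec]

lemma support_tpath_subset {x y z : V} (hz : z ∈ (tpath hT x y).support) :
    (tpath hT z y).support ⊆ (tpath hT x y).support := by
  classical
  rw [← tpath_dropUntil hT hz]
  exact Walk.support_dropUntil_subset_support _ _

lemma mem_support_tpath_middle {a b c : V} (hab : G.Adj a b) (hbc : G.Adj b c) (hac : a ≠ c) :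
    b ∈ (tpath hT a c).support := by
  rw [← eq_tpath hT (Walk.cons hab (Walk.cons hbc Walk.nil))
    (by simp [Walk.cons_isPath_iff, hab.ne, hbc.ne, hac])]
  simp

lemma snd_tpath {x y z : V} (h : G.Adj x z) (hz : z ∈ (tpath hT x y).support) :
    (tpath hT x y).snd = z := by
  rw [tpath_eq_append hT hz, tpath_of_adj hT h]
  simp

lemma mem_support_tpath_step {x u b t : V} (hub : G.Adj u b) (hbt : G.Adj b t) (hut : u ≠ t)
    (hx : u ∈ (tpath hT x b).support) : b ∈ (tpath hT x t).support := by
  by_contra hb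
  rw [tpath_concat hT hbt.symm hb, Walk.support_concat, List.mem_append,
    List.mem_singleton] at hx
  rcases hx with hx | rfl
  · exact hb (support_tpath_subset hT hx (mem_support_tpath_middle hT hub hbt hut))
  · exact hub.ne rfl

/-- A vertex `x` beyond `b` (seen from `a`) with the longest path to `a` is a leaf: every
neighbour of `x` off that path would lie beyond `b` with a longer path to `a`. -/
lemma exists_leaf_mem_support_tpath [Fintype V] [DecidableRel G.Adj] {a b : V}
    (hab : G.Adj a b) : ∃ x ∈ leaves G, b ∈ (tpath hT x a).support := by
  classical
  set S : Finset V := univ.filter fun x => b ∈ (tpath hT x a).support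
  have hbS : b ∈ S := by simp [S]
  obtain ⟨x, hxS, hmax⟩ := S.exists_max_image (fun x => (tpath hT x a).length) ⟨b, hbS⟩
  have hx : b ∈ (tpath hT x a).support := (mem_filter.1 hxS).2
  refine ⟨x, ?_, hx⟩
  have hxa : x ≠ a := by
    rintro rfl
    simp [tpath_self hT, hab.ne'] at hx
  have hnbr : G.neighborFinset x = {(tpath hT x a).snd} := by
    refine eq_singleton_iff_unique_mem.2
      ⟨(G.mem_neighborFinset _ _).2 (Walk.adj_snd (Walk.not_nil_of_ne hxa)), fun z hz => ?_⟩
    have hxz := (G.mem_neighborFinset _ _).1 hz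
    by_cases hzx : z ∈ (tpath hT x a).support
    · exact (snd_tpath hT hxz hzx).symm
    · have hcons := tpath_cons hT hxz.symm hzx
      have hzS : z ∈ S := by simp [S, hcons, hx]
      have := hmax z hzS
      simp only [hcons, Walk.length_cons] at this
      omega
  refine mem_filter.2 ⟨mem_univ _, ?_⟩
  rw [← card_neighborFinset_eq_degree, hnbr, card_singleton]

end TreePath

lemma exists_adj_ne_ne_of_degree_ne_two {G : SimpleGraph V} {a b c : V}
    [Fintype (G.neighborSet b)] (hba : G.Adj b a) (hbc : G.Adj b c) (hac : a ≠ c)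
    (hdeg : G.degree b ≠ 2) : ∃ u, G.Adj b u ∧ u ≠ a ∧ u ≠ c := by
  classical
  by_contra! h
  have hnbr : G.neighborFinset b = {a, c} := by
    ext z
    simp only [mem_neighborFinset, mem_insert, mem_singleton]
    refine ⟨fun hz => ?_, ?_⟩
    · by_contra! hz'
      exact hz'.2 (h z hz hz'.1)
    · rintro (rfl | rfl) <;> assumption
  exact hdeg (by rw [← card_neighborFinset_eq_degree, hnbr, card_pair hac])

section Distance

variable {G : SimpleGraph V} (hT : G.IsTree) (w : Sym2 V → ℝ)

lemma walkWeight_append {x y z : V} (p : G.Walk x y) (q : G.Walk y z) :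
    walkWeight w (p.append q) = walkWeight w p + walkWeight w q := by
  simp [walkWeight, Walk.edges_append]

lemma tdist_of_adj {u v : V} (h : G.Adj u v) : tdist hT w u v = w s(u, v) := by
  simp [tdist, tpath_of_adj hT h, walkWeight]

lemma tdist_eq_add_of_mem_support {x y z : V} (hz : z ∈ (tpath hT x y).support) :
    tdist hT w x y = tdist hT w x z + tdist hT w z y := by
  rw [tdist, tpath_eq_append hT hz, walkWeight_append]
  rfl

lemma tdist_concat {x u v : V} (h : G.Adj u v) (hv : v ∉ (tpath hT x u).support) :
    tdist hT w x v = tdist hT w x u + w s(u, v) := by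
  rw [tdist, tpath_concat hT h hv, Walk.concat_eq_append, walkWeight_append]
  simp [walkWeight, tdist]

lemma tdist_lt_tdist_iff_mem_support {u v : V} (h : G.Adj u v) (hw : 0 < w s(u, v)) (x : V) :
    tdist hT w x u < tdist hT w x v ↔ u ∈ (tpath hT x v).support := by
  constructor
  · intro hlt
    by_contra hu
    have := tdist_concat hT w h.symm hu
    rw [Sym2.eq_swap] at this
    linarith
  · intro hu
    rw [tdist_eq_add_of_mem_support hT w hu, tdist_of_adj hT w h]
    linarith

end Distance

section Side

variable [Fintype V] {G : SimpleGraph V} [DecidableRel G.Adj] (hT : G.IsTree) (w : Sym2 V → ℝ)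

lemma mem_Lside_iff {u v : V} (h : G.Adj u v) (hw : 0 < w s(u, v)) (x : V) :
    x ∈ Lside hT w u v ↔ x ∈ leaves G ∧ u ∈ (tpath hT x v).support := by
  rw [Lside, mem_filter, tdist_lt_tdist_iff_mem_support hT w h hw]

lemma Lside_subset_Lside {a b c : V} (hab : G.Adj a b) (hbc : G.Adj b c) (hac : a ≠ c)
    (hwab : 0 < w s(a, b)) (hwbc : 0 < w s(b, c)) : Lside hT w a b ⊆ Lside hT w b c := by
  intro x hx
  rw [mem_Lside_iff hT w hab hwab] at hx
  rw [mem_Lside_iff hT w hbc hwbc]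
  exact ⟨hx.1, mem_support_tpath_step hT hab hbc hac hx.2⟩

lemma Lside_ssubset_Lside {a b c : V} (hab : G.Adj a b) (hbc : G.Adj b c) (hac : a ≠ c)
    (hwab : 0 < w s(a, b)) (hwbc : 0 < w s(b, c)) (hdeg : G.degree b ≠ 2) :
    Lside hT w a b ⊂ Lside hT w b c := by
  refine (ssubset_iff_of_subset (Lside_subset_Lside hT w hab hbc hac hwab hwbc)).2 ?_
  obtain ⟨u, hbu, hua, huc⟩ := exists_adj_ne_ne_of_degree_ne_two hab.symm hbc hac hdeg
  obtain ⟨x, hx, hux⟩ := exists_leaf_mem_support_tpath hT hbu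
  have hxbc : x ∈ Lside hT w b c :=
    (mem_Lside_iff hT w hbc hwbc x).2 ⟨hx, mem_support_tpath_step hT hbu.symm hbc huc hux⟩
  have hxba : tdist hT w x b < tdist hT w x a := by
    rw [tdist_lt_tdist_iff_mem_support hT w hab.symm (by rwa [Sym2.eq_swap])]
    exact mem_support_tpath_step hT hbu.symm hab.symm hua hux
  exact ⟨x, hxbc, fun hxab => lt_asymm (mem_filter.1 hxab).2 hxba⟩

end Side

/-- along a path `(v_0, …, v_k)` in a tree with no degree-2
vertices, the sets `L^{v_i v_{i+1}}_{v_i}` are strictly increasing. -/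
theorem stmt5 {V : Type*} [Fintype V] {G : SimpleGraph V} [DecidableRel G.Adj]
    (hT : G.IsTree) (w : Sym2 V → ℝ) (hw : ∀ e ∈ G.edgeSet, 0 < w e)
    (hdeg : ∀ x : V, G.degree x ≠ 2)
    (k : ℕ) (v : ℕ → V)
    (hinj : ∀ i j, i ≤ k → j ≤ k → v i = v j → i = j)
    (hadj : ∀ i, i < k → G.Adj (v i) (v (i + 1))) :
    ∀ i, i + 2 ≤ k →
      Lside hT w (v i) (v (i + 1)) ⊂ Lside hT w (v (i + 1)) (v (i + 2)) := by
  intro i hik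
  have hab := hadj i (by omega)
  have hbc := hadj (i + 1) (by omega)
  have hac : v i ≠ v (i + 2) := fun h => by
    have := hinj i (i + 2) (by omega) (by omega) h
    omega
  exact Lside_ssubset_Lside hT w hab hbc hac (hw _ hab) (hw _ hbc) (hdeg _)
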